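/- arXiv:1202.6146 — 7 statements merged into one kernel-verified Lean document; each statement's English description precedes it below -/
import Mathlib

section
/- Let (a,b) be positive integers and let S(a,b) = (r_1, ..., r_n) be the sequence obtained from the Euclidean algorithm of (a,b), namely: writing x_0 = b, x_1 = a and x_{i-1} = q_i x_i + x_{i+1} with x_1 > x_2 > ... > x_p ≥ 1 and x_{p+1} = 0, the sequence S(a,b) consists of x_1 repeated q_1 times, then x_2 repeated q_2 times, ..., then x_p repeated q_p times. Then the sum of the terms of S(a,b) equals a + b - gcd(a,b). -/
/-- The Euclidean-algorithm sequence `S(a,b)` of a pair of positive integers: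
with `x₀ = b`, `x₁ = a`, each remainder `xᵢ` is repeated `qᵢ` times, where the
`qᵢ` are the quotients of the Euclidean algorithm. -/
def euclidSeq : ℕ → ℕ → List ℕ
  | a, b =>
    if h : a = 0 then []
    else
      have : b % a < a := Nat.mod_lt _ (Nat.pos_of_ne_zero h)
      List.replicate (b / a) a ++ euclidSeq (b % a) a
  termination_by a _ => a

/-! Each division step `b = (b / a) * a + b % a` contributes `(b / a) * a` to the sum and
passes from `(a, b)` to `(b % a, a)`, which lowers `a + b` by exactly that amount while
keeping the gcd; at the end `(0, g)` has sum `g`. -/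

theorem euclidSeq_zero_left (b : ℕ) : euclidSeq 0 b = [] := by
  rw [euclidSeq, dif_pos rfl]

theorem euclidSeq_of_pos {a : ℕ} (b : ℕ) (ha : 0 < a) :
    euclidSeq a b = List.replicate (b / a) a ++ euclidSeq (b % a) a := by
  rw [euclidSeq, dif_neg ha.ne']

theorem sum_euclidSeq_add_gcd (a b : ℕ) : (euclidSeq a b).sum + Nat.gcd a b = a + b := by
  induction a, b using Nat.gcd.induction with
  | H0 b => simp [euclidSeq_zero_left]
  | H1 a b ha ih =>
    rw [euclidSeq_of_pos b ha, List.sum_append, List.sum_replicate, smul_eq_mul,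
      Nat.gcd_rec a b]
    have hdiv := Nat.div_add_mod' b a
    omega

theorem euclidSeq_sum_general (a b : ℕ) :
    (euclidSeq a b).sum = a + b - Nat.gcd a b := by
  have := sum_euclidSeq_add_gcd a b
  omega

/-- The sum of the terms of the sequence `S(a,b)` obtained from the Euclidean
algorithm of positive integers `(a,b)` equals `a + b - gcd(a,b)`. -/
theorem euclidSeq_sum (a b : ℕ) (ha : 0 < a) (hb : 0 < b) :
    (euclidSeq a b).sum = a + b - Nat.gcd a b :=
  euclidSeq_sum_general a b
end

section
/- There are no positive integers d, m, a with a > 1 satisfying simultaneously d² = m·a² and 3d - 2 = m·a. -/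
/-!
Eliminating `m` gives `d² = (3d - 2)·a`, and then `(3d - 2)(9a - 3d - 2) = 4`, so `3d - 2`
is a positive divisor of `4`. Hence `d ∈ {1, 2}`, and both values force `a = 1`.
-/

lemma mul_sub_eq_four_of_sq_eq {d a : ℤ} (h : d ^ 2 = (3 * d - 2) * a) :
    (3 * d - 2) * (9 * a - 3 * d - 2) = 4 := by
  linear_combination (-9 : ℤ) * h

lemma eq_one_of_sq_eq_mul {d a : ℤ} (hd : 0 < d) (h : d ^ 2 = (3 * d - 2) * a) : a = 1 := by
  have hdvd : 3 * d - 2 ∣ 4 := ⟨_, (mul_sub_eq_four_of_sq_eq h).symm⟩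
  have hle : 3 * d - 2 ≤ 4 := Int.le_of_dvd (by norm_num) hdvd
  have hd2 : d ≤ 2 := by omega
  interval_cases d <;> linarith

/-- There are no positive integers `d`, `m`, `a` with `a > 1` satisfying
simultaneously `d² = m·a²` and `3d - 2 = m·a`. -/
theorem no_constant_multiplicity_solution :
    ¬ ∃ d m a : ℤ, 0 < d ∧ 0 < m ∧ 1 < a ∧ d ^ 2 = m * a ^ 2 ∧ 3 * d - 2 = m * a := by
  rintro ⟨d, m, a, hd, -, ha, hsq, hlin⟩
  have h : d ^ 2 = (3 * d - 2) * a := by rw [hlin, hsq]; ring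
  exact ha.ne' (eq_one_of_sq_eq_mul hd h)
end

section
/- Suppose d and r_1, ..., r_m are positive integers satisfying d² = r_1² + ... + r_m² and 3d - 2 = r_1 + ... + r_m. Then the sequence (r_1, ..., r_m) is not constant with common value greater than 1; that is, it is impossible that r_1 = r_2 = ... = r_m = a for some integer a > 1. -/
/-! For a constant sequence `rᵢ = a` the two equations become `d² = m a²` and
`3d - 2 = m a`, hence `d² = (3d - 2) a`. Since `9d² = (3d - 2)(3d + 2) + 4`, the number
`3d - 2` divides `4`, which leaves only `d ∈ {0, 1, 2}`, and each of these forces `a ≤ 1`. -/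

theorem three_mul_sub_two_dvd_four {d a : ℤ} (h : d ^ 2 = (3 * d - 2) * a) :
    3 * d - 2 ∣ 4 :=
  ⟨9 * a - (3 * d + 2), by linear_combination 9 * h⟩

theorem le_one_of_sq_eq_three_mul_sub_two_mul {d a : ℤ} (h : d ^ 2 = (3 * d - 2) * a) :
    a ≤ 1 := by
  have hdvd : (3 * d - 2).natAbs ∣ 4 := Int.natAbs_dvd_natAbs.mpr (three_mul_sub_two_dvd_four h)
  have hbound : (3 * d - 2).natAbs ≤ 4 := Nat.le_of_dvd (by norm_num) hdvd
  have hd0 : 0 ≤ d := by omega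
  have hd2 : d ≤ 2 := by omega
  interval_cases d <;> omega

theorem multiplicity_sequence_not_constant_general
    (d : ℤ) (m : ℕ) (r : Fin m → ℤ)
    (h1 : d ^ 2 = ∑ i, r i ^ 2)
    (h2 : 3 * d - 2 = ∑ i, r i) :
    ¬ ∃ a : ℤ, 1 < a ∧ ∀ i, r i = a := by
  rintro ⟨a, ha, hconst⟩
  obtain rfl : r = fun _ => a := funext hconst
  simp only [Finset.sum_const, Finset.card_univ, Fintype.card_fin, nsmul_eq_mul] at h1 h2
  have hkey : d ^ 2 = (3 * d - 2) * a := by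
    rw [h2, h1]; ring
  exact (le_one_of_sq_eq_three_mul_sub_two_mul hkey).not_gt ha

/-- If `d` and `r₁, …, r_m` are positive integers with `d² = Σ rᵢ²` and
`3d - 2 = Σ rᵢ`, then the sequence `(r₁, …, r_m)` cannot be constant with
common value greater than `1`. -/
theorem multiplicity_sequence_not_constant
    (d : ℤ) (hd : 0 < d) (m : ℕ) (hm : 1 ≤ m) (r : Fin m → ℤ)
    (hr : ∀ i, 0 < r i)
    (h1 : d ^ 2 = ∑ i, r i ^ 2)
    (h2 : 3 * d - 2 = ∑ i, r i) :
    ¬ ∃ a : ℤ, 1 < a ∧ ∀ i, r i = a :=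
  multiplicity_sequence_not_constant_general d m r h1 h2
end

section
/- Let d be a positive integer, m ≥ 1, and r_1, ..., r_m positive integers with d² = Σ r_i² and 3d - 2 = Σ r_i. Suppose d' and r_1', ..., r_m' are positive integers with r_i = 2 r_i' for all i, and suppose (d'-1)(d'-2) = Σ r_i'(r_i' - 1) and (d')² = Σ (r_i')² - 1. Then a contradiction follows; i.e., no such data exist. -/
/-!
Subtracting the genus equation `(d'-1)(d'-2) = Σ rᵢ'(rᵢ'-1)` from the self-intersection
equation `d'² = Σ rᵢ'² - 1` gives `Σ rᵢ' = 3d' - 1`. Doubling, `3d - 2 = Σ rᵢ = 6d' - 2`, so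
`d = 2d'`; but then `4d'² = d² = Σ rᵢ² = 4 Σ rᵢ'² = 4d'² + 4`.
-/

open Finset

theorem sum_eq_three_mul_sub_one_of_genus_eq {R ι : Type*} [CommRing R] (s : Finset ι)
    (d : R) (r : ι → R) (hgenus : (d - 1) * (d - 2) = ∑ i ∈ s, r i * (r i - 1))
    (hself : d ^ 2 = (∑ i ∈ s, r i ^ 2) - 1) :
    ∑ i ∈ s, r i = 3 * d - 1 := by
  have hsplit : ∑ i ∈ s, r i * (r i - 1) = (∑ i ∈ s, r i ^ 2) - ∑ i ∈ s, r i := by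
    rw [← sum_sub_distrib]
    exact sum_congr rfl fun i _ => by ring
  linear_combination hgenus - hself + hsplit

theorem no_half_multiplicity_curve_general
    (d : ℤ) (m : ℕ)
    (r : Fin m → ℤ)
    (h1 : d ^ 2 = ∑ i, r i ^ 2)
    (h2 : 3 * d - 2 = ∑ i, r i)
    (d' : ℤ)
    (r' : Fin m → ℤ)
    (hhalf : ∀ i, r i = 2 * r' i)
    (h3 : (d' - 1) * (d' - 2) = ∑ i, r' i * (r' i - 1))
    (h4 : d' ^ 2 = (∑ i, r' i ^ 2) - 1) :
    False := by
  have hsum : ∑ i, r i = 2 * ∑ i, r' i := by simp only [hhalf, mul_sum]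
  have hsq : ∑ i, r i ^ 2 = 4 * ∑ i, r' i ^ 2 := by
    simp only [hhalf, mul_pow, mul_sum]
    norm_num
  have hsum' := sum_eq_three_mul_sub_one_of_genus_eq univ d' r' h3 h4
  have hd : d = 2 * d' := by linarith
  have : (2 * d') ^ 2 = 4 * d' ^ 2 + 4 := by rw [← hd, h1, hsq, h4]; ring
  linarith

/-- Arithmetic contradiction: there exist no positive integers `d`, `m ≥ 1`,
`r₁, …, r_m` with `d² = Σ rᵢ²` and `3d - 2 = Σ rᵢ`, together with positive
integers `d'`, `r₁', …, r_m'` satisfying `rᵢ = 2rᵢ'`,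
`(d'-1)(d'-2) = Σ rᵢ'(rᵢ'-1)` and `d'² = Σ rᵢ'² - 1`. -/
theorem no_half_multiplicity_curve
    (d : ℤ) (hd : 0 < d) (m : ℕ) (hm : 1 ≤ m)
    (r : Fin m → ℤ) (hr : ∀ i, 0 < r i)
    (h1 : d ^ 2 = ∑ i, r i ^ 2)
    (h2 : 3 * d - 2 = ∑ i, r i)
    (d' : ℤ) (hd' : 0 < d')
    (r' : Fin m → ℤ) (hr' : ∀ i, 0 < r' i)
    (hhalf : ∀ i, r i = 2 * r' i)
    (h3 : (d' - 1) * (d' - 2) = ∑ i, r' i * (r' i - 1))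
    (h4 : d' ^ 2 = (∑ i, r' i ^ 2) - 1) :
    False :=
  no_half_multiplicity_curve_general d m r h1 h2 d' r' hhalf h3 h4
end

section
/- Define a weighted graph to be a finite simple graph with an integer weight attached to each vertex, and define blow-up/blow-down of weighted graphs in the classical way (blowing up at a vertex, at an edge, or freely, creating a new vertex of weight -1; equivalence ~ is generated by these moves). A weighted pair is (G, v) with v a vertex of G; a blowing-up of (G,v) is a pair (G', v') where G' blows up G at v or at an edge incident to v, and v' is the new vertex. (G,v) is erasable if some finite sequence of such blowings-up (G,v) = (G_0,e_0) ← ... ← (G_n,e_n) has G_n minus e_n equivalent to the empty weighted graph. Theorem: if (G,v) is a weighted pair in which G has a vertex w of nonnegative weight with w ≠ v and w not adjacent to v, then (G,v) is not erasable. -/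
/-- A weighted graph: a finite simple graph (on a subset of `ℕ`) with an
integer weight attached to each vertex. -/
structure WGraph where
  verts : Finset ℕ
  Adj : ℕ → ℕ → Prop
  symm : ∀ a b, Adj a b → Adj b a
  loopless : ∀ a, ¬ Adj a a
  support : ∀ a b, Adj a b → a ∈ verts ∧ b ∈ verts
  weight : ℕ → ℤ

/-- `G'` is the free blowing-up of `G`, with created vertex `e` (a new
isolated vertex of weight `-1`). -/
def IsFreeBlowup (G G' : WGraph) (e : ℕ) : Prop :=
  e ∉ G.verts ∧ G'.verts = insert e G.verts ∧
  (∀ a b, G'.Adj a b ↔ G.Adj a b) ∧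
  (∀ x, G'.weight x = if x = e then -1 else G.weight x)

/-- `G'` is the blowing-up of `G` at the vertex `u`, with created vertex `e`:
a new vertex `e` of weight `-1` is joined to `u`, and the weight of `u` drops
by `1`. -/
def IsVertexBlowup (G G' : WGraph) (u e : ℕ) : Prop :=
  u ∈ G.verts ∧ e ∉ G.verts ∧ G'.verts = insert e G.verts ∧
  (∀ a b, G'.Adj a b ↔ (G.Adj a b ∨ (a = u ∧ b = e) ∨ (a = e ∧ b = u))) ∧
  (∀ x, G'.weight x = if x = e then -1 else if x = u then G.weight u - 1 else G.weight x)

/-- `G'` is the blowing-up of `G` at the edge `{u₁, u₂}`, with created vertex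
`e`: the edge is removed, a new vertex `e` of weight `-1` is joined to `u₁`
and `u₂`, and the weights of `u₁`, `u₂` each drop by `1`. -/
def IsEdgeBlowup (G G' : WGraph) (u₁ u₂ e : ℕ) : Prop :=
  G.Adj u₁ u₂ ∧ e ∉ G.verts ∧ G'.verts = insert e G.verts ∧
  (∀ a b, G'.Adj a b ↔
    ((G.Adj a b ∧ ¬(a = u₁ ∧ b = u₂) ∧ ¬(a = u₂ ∧ b = u₁)) ∨
      (a = e ∧ (b = u₁ ∨ b = u₂)) ∨ (b = e ∧ (a = u₁ ∨ a = u₂)))) ∧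
  (∀ x, G'.weight x = if x = e then -1 else if x = u₁ then G.weight u₁ - 1
    else if x = u₂ then G.weight u₂ - 1 else G.weight x)

/-- `G'` is a blowing-up of the weighted graph `G` (at a vertex, at an edge,
or a free blowing-up). -/
def IsBlowup (G G' : WGraph) : Prop :=
  (∃ e, IsFreeBlowup G G' e) ∨ (∃ u e, IsVertexBlowup G G' u e) ∨
    (∃ u₁ u₂ e, IsEdgeBlowup G G' u₁ u₂ e)

/-- Equivalence of weighted graphs: generated by blowings-up and
blowings-down. -/
def WEquiv : WGraph → WGraph → Prop :=
  Relation.EqvGen IsBlowup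

/-- A weighted graph is equivalent to the empty weighted graph. -/
def EquivEmpty (G : WGraph) : Prop :=
  ∃ H : WGraph, WEquiv G H ∧ H.verts = ∅

/-- `H` is the weighted graph obtained from `G` by deleting the vertex `v`
(and all edges at `v`). -/
def IsDeleteVert (G : WGraph) (v : ℕ) (H : WGraph) : Prop :=
  H.verts = G.verts.erase v ∧
  (∀ a b, H.Adj a b ↔ (G.Adj a b ∧ a ≠ v ∧ b ≠ v)) ∧
  (∀ x, H.weight x = G.weight x)

/-- `(G', v')` is a blowing-up of the weighted pair `(G, v)`: `G'` blows up
`G` at the distinguished vertex `v` or at an edge incident to `v`, and the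
created vertex `v'` becomes the distinguished vertex. -/
def PairBlowup (G : WGraph) (v : ℕ) (G' : WGraph) (v' : ℕ) : Prop :=
  IsVertexBlowup G G' v v' ∨ ∃ u, G.Adj v u ∧ IsEdgeBlowup G G' v u v'

/-- There is a sequence of `n` blowings-up of weighted pairs starting at
`(G, v)` and ending at `(Gₙ, eₙ)` with `Gₙ \ {eₙ}` equivalent to the empty
weighted graph. -/
def EraseSeq (G : WGraph) (v : ℕ) (n : ℕ) : Prop :=
  ∃ (Gs : ℕ → WGraph) (es : ℕ → ℕ),
    Gs 0 = G ∧ es 0 = v ∧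
    (∀ i, i < n → PairBlowup (Gs i) (es i) (Gs (i + 1)) (es (i + 1))) ∧
    ∃ H : WGraph, IsDeleteVert (Gs n) (es n) H ∧ EquivEmpty H

/-- The weighted pair `(G, v)` is erasable. -/
def Erasable (G : WGraph) (v : ℕ) : Prop :=
  ∃ n : ℕ, EraseSeq G v n

/-- `ℓ(G, v) ∈ ℕ ∪ {∞}`: the minimal length of an erasing sequence of the
weighted pair `(G, v)`, or `∞` if `(G, v)` is not erasable. -/
noncomputable def ell (G : WGraph) (v : ℕ) : ℕ∞ :=
  sInf {n : ℕ∞ | ∃ m : ℕ, n = (m : ℕ∞) ∧ EraseSeq G v m}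

/-!
The obstruction is negative definiteness of the intersection form `Q(f) = fᵀ M f` on integer
vectors supported on the vertices, where `M` has the weights on the diagonal and the adjacency
matrix off it.
Blowing up with new vertex `e` over a centre `C` (empty, a vertex, or the two ends of an edge)
gives `Q'(f) = Q(f) - (∑_{c ∈ C} f c - f e)²`: after an integral change of coordinates the new
form is the old one plus an orthogonal `⟨-1⟩`. Hence negative definiteness is invariant under
equivalence, holds for the empty graph, and fails as soon as some vertex has weight `≥ 0`.
A blowing-up of the pair `(G, v)` does not touch a vertex `w` that is neither `v` nor a neighbour
of `v`, and `w` stays far from the new distinguished vertex; so `w` survives in `Gₙ \ {eₙ}` with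
its nonnegative weight, and `Gₙ \ {eₙ}` is not equivalent to the empty graph.
-/

open Finset

namespace WGraph

open Classical in
noncomputable def adjMatrix (G : WGraph) (a b : ℕ) : ℤ := if G.Adj a b then 1 else 0

noncomputable def intersectionForm (G : WGraph) (f : ℕ → ℤ) : ℤ :=
  ∑ a ∈ G.verts, (G.weight a * f a ^ 2 + ∑ b ∈ G.verts, G.adjMatrix a b * f a * f b)

def NegDefinite (G : WGraph) : Prop :=
  ∀ f : ℕ → ℤ, (∀ x ∉ G.verts, f x = 0) → f ≠ 0 → G.intersectionForm f < 0

lemma adjMatrix_self (G : WGraph) (a : ℕ) : G.adjMatrix a a = 0 := by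
  simp [adjMatrix, G.loopless]

lemma adjMatrix_comm (G : WGraph) (a b : ℕ) : G.adjMatrix a b = G.adjMatrix b a := by
  classical
  simp only [adjMatrix]
  exact if_congr ⟨G.symm a b, G.symm b a⟩ rfl rfl

lemma intersectionForm_zero (G : WGraph) : G.intersectionForm 0 = 0 := by
  simp [intersectionForm]

variable {G G' : WGraph}

lemma not_adj_of_notMem {e : ℕ} (he : e ∉ G.verts) (b : ℕ) : ¬ G.Adj e b :=
  fun hb => he (G.support e b hb).1

lemma intersectionForm_congr {f g : ℕ → ℤ} (h : ∀ a ∈ G.verts, f a = g a) :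
    G.intersectionForm f = G.intersectionForm g :=
  sum_congr rfl fun a ha => by
    rw [h a ha]
    exact congrArg _ (sum_congr rfl fun b hb => by rw [h b hb])

lemma intersectionForm_single {w : ℕ} (hw : w ∈ G.verts) :
    G.intersectionForm (Pi.single w 1) = G.weight w := by
  simp [intersectionForm, Pi.single_apply, hw, sum_add_distrib, adjMatrix_self]

lemma intersectionForm_insert {V : Finset ℕ} {e : ℕ} (he : e ∉ V) (hV : G.verts = insert e V)
    (f : ℕ → ℤ) :
    G.intersectionForm f = G.weight e * f e ^ 2 + 2 * ∑ b ∈ V, G.adjMatrix e b * f e * f b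
      + ∑ a ∈ V, (G.weight a * f a ^ 2 + ∑ b ∈ V, G.adjMatrix a b * f a * f b) := by
  simp only [intersectionForm, hV, sum_insert he, adjMatrix_self, sum_add_distrib]
  have hsymm : ∑ b ∈ V, G.adjMatrix e b * f b * f e = ∑ b ∈ V, G.adjMatrix e b * f e * f b :=
    sum_congr rfl fun b _ => by ring
  simp only [adjMatrix_comm G _ e, hsymm, zero_mul, zero_add]
  ring

lemma intersectionForm_eq_of_insert {e : ℕ} (he : e ∉ G.verts)
    (hV : G'.verts = insert e G.verts) (δw : ℕ → ℤ) (δA : ℕ → ℕ → ℤ)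
    (hw : ∀ a, a ≠ e → G'.weight a = G.weight a - δw a)
    (hA : ∀ a b, a ≠ e → b ≠ e → G'.adjMatrix a b = G.adjMatrix a b - δA a b) (f : ℕ → ℤ) :
    G'.intersectionForm f = G.intersectionForm f + G'.weight e * f e ^ 2
      + 2 * ∑ b ∈ G.verts, G'.adjMatrix e b * f e * f b
      - ∑ a ∈ G.verts, δw a * f a ^ 2 - ∑ a ∈ G.verts, ∑ b ∈ G.verts, δA a b * f a * f b := by
  have hne : ∀ a ∈ G.verts, a ≠ e := fun a ha => ne_of_mem_of_not_mem ha he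
  have hrow : ∀ a ∈ G.verts,
      G'.weight a * f a ^ 2 + ∑ b ∈ G.verts, G'.adjMatrix a b * f a * f b
        = (G.weight a * f a ^ 2 + ∑ b ∈ G.verts, G.adjMatrix a b * f a * f b)
          - δw a * f a ^ 2 - ∑ b ∈ G.verts, δA a b * f a * f b := by
    intro a ha
    rw [hw a (hne a ha), sum_congr rfl fun b hb => by rw [hA a b (hne a ha) (hne b hb)]]
    simp only [sub_mul, sum_sub_distrib]
    ring
  rw [intersectionForm_insert he hV, sum_congr rfl hrow, sum_sub_distrib, sum_sub_distrib,
    intersectionForm]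
  ring

lemma intersectionForm_of_isFreeBlowup {e : ℕ} (h : IsFreeBlowup G G' e) (f : ℕ → ℤ) :
    G'.intersectionForm f = G.intersectionForm f - f e ^ 2 := by
  classical
  obtain ⟨he, hV, hAdj, hw⟩ := h
  have hAe : ∀ b, G'.adjMatrix e b = 0 := fun b => by
    simp [adjMatrix, hAdj, not_adj_of_notMem he]
  rw [intersectionForm_eq_of_insert he hV 0 0 (fun a ha => by simp [hw, ha])
    (fun a b _ _ => by simp [adjMatrix, hAdj])]
  simp only [hw, ↓reduceIte, Int.reduceNeg, neg_mul, one_mul, hAe, zero_mul, sum_const_zero,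
    mul_zero, add_zero, Pi.zero_apply, sub_zero]
  ring

lemma intersectionForm_of_isVertexBlowup {u e : ℕ} (h : IsVertexBlowup G G' u e)
    (f : ℕ → ℤ) : G'.intersectionForm f = G.intersectionForm f - (f u - f e) ^ 2 := by
  classical
  obtain ⟨hu, he, hV, hAdj, hw⟩ := h
  have hAe : ∀ b, G'.adjMatrix e b = if b = u then 1 else 0 := fun b => by
    simp [adjMatrix, hAdj, not_adj_of_notMem he, (ne_of_mem_of_not_mem hu he).symm]
  rw [intersectionForm_eq_of_insert he hV (fun a => if a = u then 1 else 0) 0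
    (fun a ha => by rw [hw, if_neg ha]; split_ifs <;> simp_all)
    (fun a b ha hb => by simp [adjMatrix, hAdj, ha, hb])]
  simp only [hw, ↓reduceIte, Int.reduceNeg, neg_mul, one_mul, hAe, ite_mul, zero_mul,
    sum_ite_eq', hu, Pi.zero_apply, sum_const_zero, sub_zero]
  ring

lemma intersectionForm_of_isEdgeBlowup {u₁ u₂ e : ℕ} (h : IsEdgeBlowup G G' u₁ u₂ e)
    (f : ℕ → ℤ) : G'.intersectionForm f = G.intersectionForm f - (f u₁ + f u₂ - f e) ^ 2 := by
  classical
  obtain ⟨hadj, he, hV, hAdj, hw⟩ := h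
  have hu₁ : u₁ ∈ G.verts := (G.support _ _ hadj).1
  have hu₂ : u₂ ∈ G.verts := (G.support _ _ hadj).2
  have hne : u₁ ≠ u₂ := fun h => G.loopless u₁ (h ▸ hadj)
  have hadj' : G.Adj u₂ u₁ := G.symm _ _ hadj
  have hAe : ∀ b, G'.adjMatrix e b = (if b = u₁ then 1 else 0) + if b = u₂ then 1 else 0 :=
    fun b => by
      simp only [adjMatrix, hAdj, not_adj_of_notMem he, not_and, false_and, true_and, false_or]
      split_ifs <;> omega
  rw [intersectionForm_eq_of_insert he hV
    (fun a => (if a = u₁ then 1 else 0) + if a = u₂ then 1 else 0)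
    (fun a b => (if a = u₁ ∧ b = u₂ then 1 else 0) + if a = u₂ ∧ b = u₁ then 1 else 0)
    (fun a ha => by rw [hw, if_neg ha]; split_ifs <;> simp_all)
    (fun a b ha hb => by
      simp only [adjMatrix, hAdj, ha, hb, false_and, or_false]
      split_ifs <;> simp_all)]
  simp only [hw, ↓reduceIte, Int.reduceNeg, neg_mul, one_mul, hAe, add_mul, ite_mul, zero_mul,
    sum_add_distrib, sum_ite_eq', hu₁, hu₂, ite_and, sum_ite_irrel, sum_const_zero]
  ring

lemma negDefinite_iff_of_intersectionForm_eq {e : ℕ} {C : Finset ℕ} (he : e ∉ G.verts)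
    (hV : G'.verts = insert e G.verts) (hC : C ⊆ G.verts)
    (hform : ∀ f, G'.intersectionForm f = G.intersectionForm f - (∑ x ∈ C, f x - f e) ^ 2) :
    G.NegDefinite ↔ G'.NegDefinite := by
  constructor
  · intro hG f hf hf0
    set g := Function.update f e 0
    have hfg : ∀ a ∈ G.verts, f a = g a := fun a ha =>
      (Function.update_of_ne (ne_of_mem_of_not_mem ha he) _ _).symm
    rw [hform, intersectionForm_congr hfg, sum_congr rfl fun x hx => hfg x (hC hx)]
    by_cases hg0 : g = 0
    · have hfe : f e ≠ 0 := fun hfe => hf0 (by rw [← Function.update_eq_self e f, hfe]; exact hg0)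
      rw [hg0, intersectionForm_zero]
      simpa using sq_pos_iff.mpr hfe
    · have hg_neg := hG g (fun x hx => by
        by_cases hxe : x = e
        · simp [g, hxe]
        · simp [g, hxe, hf x (by simp [hV, hxe, hx])]) hg0
      nlinarith [sq_nonneg (∑ x ∈ C, g x - f e)]
  · intro hG' g hg hg0
    set f := Function.update g e (∑ x ∈ C, g x)
    have hfg : ∀ a ∈ G.verts, f a = g a := fun a ha =>
      Function.update_of_ne (ne_of_mem_of_not_mem ha he) _ _
    have hfe : f e = ∑ x ∈ C, g x := Function.update_self ..
    have hf_neg := hG' f (fun x hx => by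
        rw [hV, mem_insert, not_or] at hx
        simp [f, hx.1, hg x hx.2]) (fun hf0 => hg0 ?_)
    · rwa [hform, intersectionForm_congr hfg, sum_congr rfl fun x hx => hfg x (hC hx),
        hfe, sub_self, zero_pow two_ne_zero, sub_zero] at hf_neg
    · funext x
      by_cases hx : x ∈ G.verts
      · rw [← hfg x hx, hf0]
      · exact hg x hx

lemma negDefinite_iff_of_isBlowup (h : IsBlowup G G') : G.NegDefinite ↔ G'.NegDefinite := by
  rcases h with ⟨e, h⟩ | ⟨u, e, h⟩ | ⟨u₁, u₂, e, h⟩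
  · exact negDefinite_iff_of_intersectionForm_eq (C := ∅) h.1 h.2.1 (empty_subset _)
      fun f => by simp [intersectionForm_of_isFreeBlowup h]
  · exact negDefinite_iff_of_intersectionForm_eq (C := {u}) h.2.1 h.2.2.1
      (singleton_subset_iff.mpr h.1) fun f => by simp [intersectionForm_of_isVertexBlowup h]
  · have hne : u₁ ≠ u₂ := fun hu => G.loopless u₁ (hu ▸ h.1)
    exact negDefinite_iff_of_intersectionForm_eq (C := {u₁, u₂}) h.2.1 h.2.2.1
      (insert_subset_iff.mpr
        ⟨(G.support _ _ h.1).1, singleton_subset_iff.mpr (G.support _ _ h.1).2⟩)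
      fun f => by simp [intersectionForm_of_isEdgeBlowup h, sum_pair hne]

lemma negDefinite_iff_of_wEquiv (h : WEquiv G G') : G.NegDefinite ↔ G'.NegDefinite := by
  induction h with
  | rel _ _ h => exact negDefinite_iff_of_isBlowup h
  | refl => exact Iff.rfl
  | symm _ _ _ ih => exact ih.symm
  | trans _ _ _ _ _ ih₁ ih₂ => exact ih₁.trans ih₂

lemma negDefinite_of_verts_eq_empty (h : G.verts = ∅) : G.NegDefinite :=
  fun f hf hf0 => absurd (funext fun x => hf x (by simp [h])) hf0

lemma not_negDefinite_of_nonneg_weight {w : ℕ} (hw : w ∈ G.verts) (h0 : 0 ≤ G.weight w) :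
    ¬ G.NegDefinite := fun hG => by
  have hneg := hG (Pi.single w 1)
    (fun x hx => Pi.single_eq_of_ne (ne_of_mem_of_not_mem hw hx).symm _) (by simp)
  rw [intersectionForm_single hw] at hneg
  exact hneg.not_ge h0

lemma not_equivEmpty_of_not_negDefinite (h : ¬ G.NegDefinite) : ¬ EquivEmpty G :=
  fun ⟨_, hGH, hH⟩ => h ((negDefinite_iff_of_wEquiv hGH).mpr (negDefinite_of_verts_eq_empty hH))

def IsFarVertex (G : WGraph) (v w : ℕ) : Prop :=
  w ∈ G.verts ∧ w ≠ v ∧ ¬ G.Adj v w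

lemma IsFarVertex.of_pairBlowup {v v' w : ℕ} (h : PairBlowup G v G' v')
    (hw : G.IsFarVertex v w) : G'.IsFarVertex v' w ∧ G'.weight w = G.weight w := by
  obtain ⟨hwG, hwv, hvw⟩ := hw
  rcases h with ⟨-, he, hV, hAdj, hwt⟩ | ⟨u, hvu, -, he, hV, hAdj, hwt⟩
  · have hwe : w ≠ v' := ne_of_mem_of_not_mem hwG he
    exact ⟨⟨by simp [hV, hwG], hwe, by simp [hAdj, not_adj_of_notMem he, hwe, hwv]⟩,
      by simp [hwt, hwe, hwv]⟩
  · have hwe : w ≠ v' := ne_of_mem_of_not_mem hwG he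
    have hwu : w ≠ u := fun hwu => hvw (hwu ▸ hvu)
    exact ⟨⟨by simp [hV, hwG], hwe, by simp [hAdj, not_adj_of_notMem he, hwe, hwv, hwu]⟩,
      by simp [hwt, hwe, hwv, hwu]⟩

lemma IsFarVertex.of_pairBlowup_chain {Gs : ℕ → WGraph} {es : ℕ → ℕ} {n w : ℕ}
    (hstep : ∀ i, i < n → PairBlowup (Gs i) (es i) (Gs (i + 1)) (es (i + 1)))
    (hw : (Gs 0).IsFarVertex (es 0) w) :
    (Gs n).IsFarVertex (es n) w ∧ (Gs n).weight w = (Gs 0).weight w := by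
  suffices ∀ i ≤ n, (Gs i).IsFarVertex (es i) w ∧ (Gs i).weight w = (Gs 0).weight w from
    this n le_rfl
  intro i
  induction i with
  | zero => exact fun _ => ⟨hw, rfl⟩
  | succ i ih =>
    intro hi
    obtain ⟨hfar, hweight⟩ := ih (Nat.le_of_succ_le hi)
    obtain ⟨hfar', hweight'⟩ := hfar.of_pairBlowup (hstep i hi)
    exact ⟨hfar', hweight'.trans hweight⟩

end WGraph

open WGraph in
theorem not_erasable_of_nonneg_far_vertex_general
    (G : WGraph) (v : ℕ)
    (w : ℕ) (hw : w ∈ G.verts) (hwv : w ≠ v) (hadj : ¬ G.Adj v w)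
    (hweight : 0 ≤ G.weight w) :
    ¬ Erasable G v := by
  rintro ⟨n, Gs, es, rfl, rfl, hstep, H, ⟨hHverts, -, hHweight⟩, hH⟩
  obtain ⟨⟨hwn, hwe, -⟩, hwn_weight⟩ := IsFarVertex.of_pairBlowup_chain hstep ⟨hw, hwv, hadj⟩
  have hwH : w ∈ H.verts := by simp [hHverts, hwe, hwn]
  refine not_equivEmpty_of_not_negDefinite (not_negDefinite_of_nonneg_weight hwH ?_) hH
  rwa [hHweight, hwn_weight]

/-- If `G` has a vertex `w` of nonnegative weight with `w ≠ v` and `w` not a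
neighbour of `v`, then the weighted pair `(G, v)` is not erasable. -/
theorem not_erasable_of_nonneg_far_vertex
    (G : WGraph) (v : ℕ) (hv : v ∈ G.verts)
    (w : ℕ) (hw : w ∈ G.verts) (hwv : w ≠ v) (hadj : ¬ G.Adj v w)
    (hweight : 0 ≤ G.weight w) :
    ¬ Erasable G v :=
  not_erasable_of_nonneg_far_vertex_general G v w hw hwv hadj hweight
end

section
/- With weighted pairs and erasability defined as in the paper: if G has at least two vertices, the distinguished vertex v has negative weight, and every vertex of G other than v has weight strictly less than -1, then the weighted pair (G, v) is not erasable. -/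
/-!
Along an erasing sequence the hypothesis propagates: the new distinguished vertex has weight `-1`,
the old one loses `1`, and no weight increases. So the last graph minus its distinguished vertex is
nonempty with all weights `< -1`, and it suffices that every nonempty graph equivalent to the empty
one has a vertex of weight `-1`.

Call a graph constructible if it arises from an empty graph by blowings-up. Such a graph has all
weights `≤ -1` and, unless empty, a vertex of weight `-1` (the last one created). Constructible
graphs are closed under blowing down, hence under equivalence: if `G'` blows up a constructible
`G₁` with created vertex `e` and blows up `G` with created vertex `f ≠ e`, then `e` and `f` are not
adjacent (else `f` would have weight `0` in `G₁`), so `f` can still be blown down in `G₁`, the two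
blowings-down commute, and `G` is a blowing-up of a blowing-down of `G₁`, constructible by
induction. The exception is when `e` and `f` have the same two neighbours; then the transposition
of `e` and `f` is an automorphism of `G'` carrying `G₁` onto `G`.
-/

namespace WGraph

@[ext]
theorem ext {G H : WGraph} (hv : G.verts = H.verts) (hadj : ∀ a b, G.Adj a b ↔ H.Adj a b)
    (hw : ∀ x, G.weight x = H.weight x) : G = H := by
  obtain ⟨_, A, _, _, _, _⟩ := G
  obtain ⟨_, B, _, _, _, _⟩ := H
  obtain rfl : A = B := funext₂ fun a b => propext (hadj a b)
  obtain rfl := hv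
  obtain rfl := funext hw
  rfl

theorem ne_of_adj_of_notMem {G : WGraph} {e a b : ℕ} (he : e ∉ G.verts) (h : G.Adj a b) :
    a ≠ e ∧ b ≠ e :=
  ⟨fun h' => he (h' ▸ (G.support a b h).1), fun h' => he (h' ▸ (G.support a b h).2)⟩

open Classical

/-- Inverse of blowing up with created vertex `e`. The weight `c` left at `e`, which is no longer a
vertex, is arbitrary. -/
noncomputable def blowDown (G : WGraph) (e : ℕ) (c : ℤ) : WGraph where
  verts := G.verts.erase e
  Adj a b := a ≠ e ∧ b ≠ e ∧ (G.Adj a b ∨ (G.Adj e a ∧ G.Adj e b ∧ a ≠ b))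
  symm a b := by
    rintro ⟨ha, hb, h | ⟨h₁, h₂, hne⟩⟩
    exacts [⟨hb, ha, .inl (G.symm a b h)⟩, ⟨hb, ha, .inr ⟨h₂, h₁, hne.symm⟩⟩]
  loopless a := by rintro ⟨-, -, h | ⟨-, -, h⟩⟩; exacts [G.loopless a h, h rfl]
  support a b := by
    rintro ⟨ha, hb, h | ⟨h₁, h₂, -⟩⟩
    · exact ⟨Finset.mem_erase.2 ⟨ha, (G.support a b h).1⟩,
        Finset.mem_erase.2 ⟨hb, (G.support a b h).2⟩⟩
    · exact ⟨Finset.mem_erase.2 ⟨ha, (G.support e a h₁).2⟩,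
        Finset.mem_erase.2 ⟨hb, (G.support e b h₂).2⟩⟩
  weight x := if x = e then c else G.weight x + if G.Adj e x then 1 else 0

section blowDown

variable {G : WGraph} {e f : ℕ} {c d : ℤ}

@[simp]
theorem verts_blowDown : (G.blowDown e c).verts = G.verts.erase e := rfl

@[simp]
theorem adj_blowDown {a b : ℕ} : (G.blowDown e c).Adj a b ↔
    a ≠ e ∧ b ≠ e ∧ (G.Adj a b ∨ (G.Adj e a ∧ G.Adj e b ∧ a ≠ b)) := Iff.rfl

@[simp]
theorem weight_blowDown_self : (G.blowDown e c).weight e = c := if_pos rfl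

theorem weight_blowDown_of_ne {x : ℕ} (hx : x ≠ e) :
    (G.blowDown e c).weight x = G.weight x + if G.Adj e x then 1 else 0 := if_neg hx

theorem blowDown_comm (hef : e ≠ f) (hadj : ¬ G.Adj e f) :
    (G.blowDown e c).blowDown f d = (G.blowDown f d).blowDown e c := by
  have hadj' : ¬ G.Adj f e := fun h => hadj (G.symm f e h)
  refine ext (by simp only [verts_blowDown, Finset.erase_right_comm]) (fun a b => ?_) fun x => ?_
  · simp only [adj_blowDown]
    tauto
  · by_cases hxe : x = e
    · subst hxe
      simp [weight_blowDown_of_ne hef]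
    by_cases hxf : x = f
    · subst hxf
      simp [weight_blowDown_of_ne (Ne.symm hef)]
    rw [weight_blowDown_of_ne hxe, weight_blowDown_of_ne hxf, weight_blowDown_of_ne hxe,
      weight_blowDown_of_ne hxf]
    simp only [adj_blowDown, ne_eq, hef, Ne.symm hef, hxe, hxf, hadj, hadj', not_false_eq_true,
      true_and, false_and, or_false]
    omega

theorem adj_blowDown_iff_of_not_adj {x : ℕ} (hfe : f ≠ e) (hadj : ¬ G.Adj e f) :
    (G.blowDown e c).Adj f x ↔ G.Adj f x := by
  refine ⟨fun ⟨_, _, h⟩ => h.resolve_right fun h => hadj h.1, fun h => ⟨hfe, ?_, .inl h⟩⟩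
  rintro rfl
  exact hadj (G.symm f x h)

end blowDown

structure IsContractible (G : WGraph) (e : ℕ) : Prop where
  mem : e ∈ G.verts
  weight_eq : G.weight e = -1
  eq_or_eq_or_eq : ∀ a b c, G.Adj e a → G.Adj e b → G.Adj e c → a = b ∨ a = c ∨ b = c
  not_adj : ∀ a b, G.Adj e a → G.Adj e b → ¬ G.Adj a b

section IsContractible

variable {G : WGraph} {e f : ℕ} {c : ℤ}

theorem isContractible_of_adj_imp {u₁ u₂ : ℕ} (he : e ∈ G.verts) (hw : G.weight e = -1)
    (hN : ∀ x, G.Adj e x → x = u₁ ∨ x = u₂) (hu : ¬ G.Adj u₁ u₂) : G.IsContractible e where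
  mem := he
  weight_eq := hw
  eq_or_eq_or_eq a b c ha hb hc := by
    rcases hN a ha with rfl | rfl <;> rcases hN b hb with rfl | rfl <;>
      rcases hN c hc with rfl | rfl <;> simp
  not_adj a b ha hb := by
    rcases hN a ha with rfl | rfl <;> rcases hN b hb with rfl | rfl
    exacts [G.loopless _, hu, fun h => hu (G.symm _ _ h), G.loopless _]

theorem IsContractible.blowDown (hf : G.IsContractible f) (hfe : f ≠ e) (hadj : ¬ G.Adj e f)
    (hshare : ∀ a b, G.Adj e a → G.Adj e b → G.Adj f a → G.Adj f b → a = b) :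
    (G.blowDown e c).IsContractible f where
  mem := Finset.mem_erase.2 ⟨hfe, hf.mem⟩
  weight_eq := by simp [weight_blowDown_of_ne hfe, hadj, hf.weight_eq]
  eq_or_eq_or_eq a b c := by
    simp only [adj_blowDown_iff_of_not_adj hfe hadj]
    exact hf.eq_or_eq_or_eq a b c
  not_adj a b ha hb := by
    rw [adj_blowDown_iff_of_not_adj hfe hadj] at ha hb
    rintro ⟨-, -, h | ⟨hea, heb, hab⟩⟩
    exacts [hf.not_adj a b ha hb h, hab (hshare a b hea heb ha hb)]

theorem IsContractible.adj_iff_of_shared (he : G.IsContractible e) (hf : G.IsContractible f)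
    {a b : ℕ} (hab : a ≠ b) (hea : G.Adj e a) (heb : G.Adj e b) (hfa : G.Adj f a)
    (hfb : G.Adj f b) (x : ℕ) : G.Adj e x ↔ G.Adj f x := by
  constructor <;> intro hx
  · rcases he.eq_or_eq_or_eq x a b hx hea heb with rfl | rfl | h
    exacts [hfa, hfb, absurd h hab]
  · rcases hf.eq_or_eq_or_eq x a b hx hfa hfb with rfl | rfl | h
    exacts [hea, heb, absurd h hab]

theorem isFreeBlowup_blowDown (he : e ∈ G.verts) (hw : G.weight e = -1)
    (hN : ∀ x, ¬ G.Adj e x) : IsFreeBlowup (G.blowDown e c) G e := by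
  refine ⟨Finset.notMem_erase e _, (Finset.insert_erase he).symm, fun a b => ?_, fun x => ?_⟩
  · simp only [adj_blowDown]
    grind [G.symm]
  · split_ifs with hx
    · rwa [hx]
    · simp [weight_blowDown_of_ne hx, hN]

theorem isVertexBlowup_blowDown {u : ℕ} (he : e ∈ G.verts) (hw : G.weight e = -1)
    (hN : ∀ x, G.Adj e x ↔ x = u) : IsVertexBlowup (G.blowDown e c) G u e := by
  have hue : u ≠ e := fun h => G.loopless e (h ▸ (hN u).2 rfl)
  refine ⟨Finset.mem_erase.2 ⟨hue, (G.support e u ((hN u).2 rfl)).2⟩, Finset.notMem_erase e _,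
    (Finset.insert_erase he).symm, fun a b => ?_, fun x => ?_⟩
  · simp only [adj_blowDown]
    grind [G.symm]
  · split_ifs with hx hxu
    · rwa [hx]
    · simp [hxu, weight_blowDown_of_ne hue, hN]
    · simp [weight_blowDown_of_ne hx, hN, hxu]

theorem isEdgeBlowup_blowDown {u₁ u₂ : ℕ} (he : e ∈ G.verts) (hw : G.weight e = -1)
    (hN : ∀ x, G.Adj e x ↔ x = u₁ ∨ x = u₂) (hne : u₁ ≠ u₂) (hu : ¬ G.Adj u₁ u₂) :
    IsEdgeBlowup (G.blowDown e c) G u₁ u₂ e := by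
  have hu₁e : u₁ ≠ e := fun h => G.loopless e (h ▸ (hN u₁).2 (.inl rfl))
  have hu₂e : u₂ ≠ e := fun h => G.loopless e (h ▸ (hN u₂).2 (.inr rfl))
  refine ⟨⟨hu₁e, hu₂e, .inr ⟨(hN u₁).2 (.inl rfl), (hN u₂).2 (.inr rfl), hne⟩⟩,
    Finset.notMem_erase e _, (Finset.insert_erase he).symm, fun a b => ?_, fun x => ?_⟩
  · simp only [adj_blowDown]
    grind [G.symm]
  · split_ifs with hx hx₁ hx₂
    · rwa [hx]
    · simp [hx₁, weight_blowDown_of_ne hu₁e, hN]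
    · simp [hx₂, weight_blowDown_of_ne hu₂e, hN]
    · simp [weight_blowDown_of_ne hx, hN, hx₁, hx₂]

theorem IsContractible.isBlowup_blowDown (h : G.IsContractible e) :
    IsBlowup (G.blowDown e c) G := by
  by_cases h₁ : ∃ a, G.Adj e a
  swap
  · exact .inl ⟨e, isFreeBlowup_blowDown h.mem h.weight_eq fun x hx => h₁ ⟨x, hx⟩⟩
  obtain ⟨a, ha⟩ := h₁
  by_cases h₂ : ∃ b, G.Adj e b ∧ b ≠ a
  swap
  · refine .inr <| .inl ⟨a, e, isVertexBlowup_blowDown h.mem h.weight_eq fun x => ?_⟩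
    exact ⟨fun hx => by_contra fun hxa => h₂ ⟨x, hx, hxa⟩, fun hx => hx ▸ ha⟩
  obtain ⟨b, hb, hba⟩ := h₂
  refine .inr <| .inr ⟨a, b, e, isEdgeBlowup_blowDown h.mem h.weight_eq (fun x => ?_)
    hba.symm (h.not_adj a b ha hb)⟩
  refine ⟨fun hx => ?_, by rintro (rfl | rfl) <;> assumption⟩
  rcases h.eq_or_eq_or_eq x a b hx ha hb with h | h | h
  exacts [.inl h, .inr h, absurd h.symm hba]

end IsContractible

end WGraph

open WGraph

section Blowup

variable {G G' : WGraph} {e : ℕ}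

theorem IsFreeBlowup.not_adj (h : IsFreeBlowup G G' e) (x : ℕ) : ¬ G'.Adj e x := fun hx =>
  h.1 (G.support e x ((h.2.2.1 e x).1 hx)).1

theorem IsVertexBlowup.adj_iff {u : ℕ} (h : IsVertexBlowup G G' u e) (x : ℕ) :
    G'.Adj e x ↔ x = u := by
  obtain ⟨hu, he, -, hadj, -⟩ := h
  have := ne_of_adj_of_notMem he (a := e) (b := x)
  have hue : u ≠ e := fun h => he (h ▸ hu)
  rw [hadj]
  grind

theorem IsEdgeBlowup.adj_iff {u₁ u₂ : ℕ} (h : IsEdgeBlowup G G' u₁ u₂ e) (x : ℕ) :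
    G'.Adj e x ↔ x = u₁ ∨ x = u₂ := by
  obtain ⟨hu, he, -, hadj, -⟩ := h
  have := ne_of_adj_of_notMem he (a := e) (b := x)
  have := ne_of_adj_of_notMem he hu
  rw [hadj]
  grind

theorem IsFreeBlowup.isContractible (h : IsFreeBlowup G G' e) : G'.IsContractible e := by
  have hN := h.not_adj
  obtain ⟨-, hverts, -, hw⟩ := h
  exact isContractible_of_adj_imp (u₁ := e) (u₂ := e) (by simp [hverts]) (by simp [hw])
    (fun x hx => absurd hx (hN x)) (G'.loopless e)

theorem IsVertexBlowup.isContractible {u : ℕ} (h : IsVertexBlowup G G' u e) :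
    G'.IsContractible e := by
  have hN := h.adj_iff
  obtain ⟨-, -, hverts, -, hw⟩ := h
  exact isContractible_of_adj_imp (u₁ := u) (u₂ := u) (by simp [hverts]) (by simp [hw])
    (fun x hx => .inl ((hN x).1 hx)) (G'.loopless u)

theorem IsEdgeBlowup.isContractible {u₁ u₂ : ℕ} (h : IsEdgeBlowup G G' u₁ u₂ e) :
    G'.IsContractible e := by
  have hN := h.adj_iff
  obtain ⟨hu, he, hverts, hadj, hw⟩ := h
  refine isContractible_of_adj_imp (by simp [hverts]) (by simp [hw])
    (fun x hx => (hN x).1 hx) ?_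
  have := ne_of_adj_of_notMem he hu
  rw [hadj]
  grind

theorem IsFreeBlowup.eq_blowDown (h : IsFreeBlowup G G' e) :
    G = G'.blowDown e (G.weight e) := by
  have hN := h.not_adj
  obtain ⟨he, hverts, hadj, hw⟩ := h
  refine WGraph.ext (by simp [hverts, he]) (fun a b => ?_) fun x => ?_
  · have := ne_of_adj_of_notMem he (a := a) (b := b)
    simp only [adj_blowDown, hN, hadj]
    grind
  · rcases eq_or_ne x e with rfl | hx
    · simp
    · simp [weight_blowDown_of_ne hx, hN, hw, hx]

theorem IsVertexBlowup.eq_blowDown {u : ℕ} (h : IsVertexBlowup G G' u e) :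
    G = G'.blowDown e (G.weight e) := by
  have hN := h.adj_iff
  obtain ⟨-, he, hverts, hadj, hw⟩ := h
  refine WGraph.ext (by simp [hverts, he]) (fun a b => ?_) fun x => ?_
  · have := ne_of_adj_of_notMem he (a := a) (b := b)
    simp only [adj_blowDown, hN, hadj]
    grind
  · rcases eq_or_ne x e with rfl | hx
    · simp
    · simp only [weight_blowDown_of_ne hx, hN, hw, hx]
      split_ifs <;> simp_all

theorem IsEdgeBlowup.eq_blowDown {u₁ u₂ : ℕ} (h : IsEdgeBlowup G G' u₁ u₂ e) :
    G = G'.blowDown e (G.weight e) := by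
  have hN := h.adj_iff
  obtain ⟨hu, he, hverts, hadj, hw⟩ := h
  refine WGraph.ext (by simp [hverts, he]) (fun a b => ?_) fun x => ?_
  · have := ne_of_adj_of_notMem he (a := a) (b := b)
    simp only [adj_blowDown, hN, hadj]
    grind [G.symm, G.loopless]
  · rcases eq_or_ne x e with rfl | hx
    · simp
    · simp only [weight_blowDown_of_ne hx, hN, hw, hx]
      split_ifs <;> simp_all

theorem IsBlowup.exists_eq_blowDown (h : IsBlowup G G') :
    ∃ e c, G'.IsContractible e ∧ G = G'.blowDown e c := by
  rcases h with ⟨e, h⟩ | ⟨u, e, h⟩ | ⟨u₁, u₂, e, h⟩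
  exacts [⟨e, _, h.isContractible, h.eq_blowDown⟩, ⟨e, _, h.isContractible, h.eq_blowDown⟩,
    ⟨e, _, h.isContractible, h.eq_blowDown⟩]

end Blowup

namespace WGraph

/-- Weights off the vertex set are junk (`WGraph.weight` is total on `ℕ`) and are not compared. -/
structure IsRelabelling (σ : Equiv.Perm ℕ) (G H : WGraph) : Prop where
  verts_eq : H.verts = G.verts.image σ
  adj_iff : ∀ a b, H.Adj (σ a) (σ b) ↔ G.Adj a b
  weight_eq : ∀ x ∈ G.verts, H.weight (σ x) = G.weight x

namespace IsRelabelling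

variable {σ : Equiv.Perm ℕ} {G H : WGraph} {e : ℕ}

theorem refl (G : WGraph) : IsRelabelling (Equiv.refl ℕ) G G :=
  ⟨by simp, fun _ _ => Iff.rfl, fun _ _ => rfl⟩

theorem isContractible (h : IsRelabelling σ G H) (he : G.IsContractible e) :
    H.IsContractible (σ e) where
  mem := h.verts_eq ▸ Finset.mem_image_of_mem σ he.mem
  weight_eq := (h.weight_eq e he.mem).trans he.weight_eq
  eq_or_eq_or_eq a b c := by
    obtain ⟨a, rfl⟩ := σ.surjective a
    obtain ⟨b, rfl⟩ := σ.surjective b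
    obtain ⟨c, rfl⟩ := σ.surjective c
    simpa only [h.adj_iff, σ.apply_eq_iff_eq] using he.eq_or_eq_or_eq a b c
  not_adj a b := by
    obtain ⟨a, rfl⟩ := σ.surjective a
    obtain ⟨b, rfl⟩ := σ.surjective b
    simpa only [h.adj_iff] using he.not_adj a b

theorem blowDown (h : IsRelabelling σ G H) (c d : ℤ) :
    IsRelabelling σ (G.blowDown e c) (H.blowDown (σ e) d) where
  verts_eq := by simp [h.verts_eq, Finset.image_erase σ.injective]
  adj_iff a b := by simp [h.adj_iff]
  weight_eq x hx := by
    have hxe : x ≠ e := Finset.ne_of_mem_erase hx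
    rw [weight_blowDown_of_ne (σ.injective.ne hxe), weight_blowDown_of_ne hxe, h.adj_iff,
      h.weight_eq x (Finset.mem_of_mem_erase hx)]

end IsRelabelling

theorem isRelabelling_swap {G : WGraph} {e f : ℕ} (he : e ∈ G.verts) (hf : f ∈ G.verts)
    (hw : G.weight e = G.weight f) (hN : ∀ x, G.Adj e x ↔ G.Adj f x) :
    IsRelabelling (Equiv.swap e f) G G where
  verts_eq := by
    rw [← Equiv.coe_toEmbedding, ← Finset.map_eq_image, Finset.map_perm]
    intro x hx
    by_contra hxG
    exact hx (Equiv.swap_apply_of_ne_of_ne (by rintro rfl; exact hxG he)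
      (by rintro rfl; exact hxG hf))
  adj_iff a b := by
    have hN' : ∀ x, G.Adj x e ↔ G.Adj x f := fun x =>
      ⟨fun h => G.symm _ _ ((hN x).1 (G.symm _ _ h)),
        fun h => G.symm _ _ ((hN x).2 (G.symm _ _ h))⟩
    simp only [Equiv.swap_apply_def]
    split_ifs <;> subst_vars <;> simp_all [G.loopless]
  weight_eq x _ := by
    rcases eq_or_ne x e with rfl | hxe
    · simp [hw]
    rcases eq_or_ne x f with rfl | hxf
    · simp [hw]
    · rw [Equiv.swap_apply_of_ne_of_ne hxe hxf]

end WGraph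

inductive Constructible : WGraph → Prop
  | empty {G : WGraph} : G.verts = ∅ → Constructible G
  | blowup {G G' : WGraph} : Constructible G → IsBlowup G G' → Constructible G'

namespace Constructible

variable {G G' H : WGraph}

theorem weight_le (h : Constructible G) : ∀ x ∈ G.verts, G.weight x ≤ -1 := by
  induction h with
  | empty hG => simp [hG]
  | blowup _ hb ih =>
    obtain ⟨e, c, he, rfl⟩ := hb.exists_eq_blowDown
    intro x hx
    rcases eq_or_ne x e with rfl | hxe
    · exact he.weight_eq.le
    have := ih x (Finset.mem_erase.2 ⟨hxe, hx⟩)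
    rw [weight_blowDown_of_ne hxe] at this
    split_ifs at this <;> omega

theorem exists_weight_eq_neg_one (h : Constructible G) (hne : G.verts.Nonempty) :
    ∃ x ∈ G.verts, G.weight x = -1 := by
  cases h with
  | empty hG => simp [hG] at hne
  | blowup _ hb =>
    obtain ⟨e, c, he, -⟩ := hb.exists_eq_blowDown
    exact ⟨e, he.mem, he.weight_eq⟩

theorem of_isRelabelling {σ : Equiv.Perm ℕ} (h : Constructible G) (hσ : IsRelabelling σ G H) :
    Constructible H := by
  induction h generalizing H with
  | empty hG => exact .empty (by simp [hσ.verts_eq, hG])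
  | blowup _ hb ih =>
    obtain ⟨e, c, he, rfl⟩ := hb.exists_eq_blowDown
    exact .blowup (ih (hσ.blowDown c 0)) (hσ.isContractible he).isBlowup_blowDown

theorem of_isBlowup (h : Constructible G') (hb : IsBlowup G G') : Constructible G := by
  induction h generalizing G with
  | empty hG' =>
    obtain ⟨e, c, he, -⟩ := hb.exists_eq_blowDown
    simpa [hG'] using he.mem
  | @blowup G₁ G' hG₁ hb₁ ih =>
    obtain ⟨e, c₁, he, rfl⟩ := hb₁.exists_eq_blowDown
    obtain ⟨f, c, hf, rfl⟩ := hb.exists_eq_blowDown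
    rcases eq_or_ne e f with rfl | hef
    · exact hG₁.of_isRelabelling ((IsRelabelling.refl G').blowDown c₁ c)
    have hadj : ¬ G'.Adj e f := by
      intro hadj
      have := hG₁.weight_le f (Finset.mem_erase.2 ⟨hef.symm, hf.mem⟩)
      simp [weight_blowDown_of_ne hef.symm, hadj, hf.weight_eq] at this
    by_cases hshare : ∀ a b, G'.Adj e a → G'.Adj e b → G'.Adj f a → G'.Adj f b → a = b
    · have h₀ := ih ((hf.blowDown hef.symm hadj hshare (c := c₁)).isBlowup_blowDown (c := c))
      rw [blowDown_comm hef hadj] at h₀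
      exact h₀.blowup (he.blowDown hef (fun h => hadj (G'.symm _ _ h))
        fun a b hfa hfb hea heb => hshare a b hea heb hfa hfb).isBlowup_blowDown
    · obtain ⟨a, b, hea, heb, hfa, hfb, hab⟩ : ∃ a b, G'.Adj e a ∧ G'.Adj e b ∧ G'.Adj f a ∧
          G'.Adj f b ∧ a ≠ b := by simpa using hshare
      have hσ := (isRelabelling_swap he.mem hf.mem (he.weight_eq.trans hf.weight_eq.symm)
        (he.adj_iff_of_shared hf hab hea heb hfa hfb)).blowDown (e := e) c₁ c
      rw [Equiv.swap_apply_left] at hσ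
      exact hG₁.of_isRelabelling hσ

end Constructible

theorem WEquiv.constructible_iff {G H : WGraph} (h : WEquiv G H) :
    Constructible G ↔ Constructible H := by
  induction h with
  | rel G H hb => exact ⟨fun h => h.blowup hb, fun h => h.of_isBlowup hb⟩
  | refl => exact Iff.rfl
  | symm _ _ _ ih => exact ih.symm
  | trans _ _ _ _ _ ih₁ ih₂ => exact ih₁.trans ih₂

theorem EquivEmpty.constructible {G : WGraph} (h : EquivEmpty G) : Constructible G :=
  let ⟨_, hGH, hH⟩ := h
  hGH.constructible_iff.2 (.empty hH)

theorem PairBlowup.isContractible_and_eq_blowDown {G G' : WGraph} {v v' : ℕ}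
    (h : PairBlowup G v G' v') :
    G'.IsContractible v' ∧ G = G'.blowDown v' (G.weight v') ∧ G'.Adj v' v := by
  rcases h with h | ⟨u, -, h⟩
  exacts [⟨h.isContractible, h.eq_blowDown, (h.adj_iff v).2 rfl⟩,
    ⟨h.isContractible, h.eq_blowDown, (h.adj_iff v).2 (.inl rfl)⟩]

def HasSmallWeights (G : WGraph) (v : ℕ) : Prop :=
  2 ≤ G.verts.card ∧ G.weight v < 0 ∧ ∀ w ∈ G.verts, w ≠ v → G.weight w < -1

theorem PairBlowup.hasSmallWeights {G G' : WGraph} {v v' : ℕ} (h : PairBlowup G v G' v')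
    (hG : HasSmallWeights G v) : HasSmallWeights G' v' := by
  obtain ⟨hv', hGG', hadj⟩ := h.isContractible_and_eq_blowDown
  obtain ⟨hcard, hwv, hsmall⟩ := hG
  rw [hGG'] at hcard hwv hsmall
  have hvv' : v ≠ v' := fun h => G'.loopless v' (h ▸ hadj)
  refine ⟨?_, by rw [hv'.weight_eq]; omega, fun w hw hwv' => ?_⟩
  · rw [verts_blowDown, Finset.card_erase_of_mem hv'.mem] at hcard
    omega
  rw [weight_blowDown_of_ne hvv', if_pos hadj] at hwv
  rcases eq_or_ne w v with rfl | hwv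
  · omega
  have := hsmall w (Finset.mem_erase.2 ⟨hwv', hw⟩) hwv
  rw [weight_blowDown_of_ne hwv'] at this
  split_ifs at this <;> omega

theorem HasSmallWeights.not_equivEmpty {G H : WGraph} {v : ℕ} (hG : HasSmallWeights G v)
    (hH : IsDeleteVert G v H) : ¬ EquivEmpty H := fun hemp => by
  obtain ⟨hcard, -, hsmall⟩ := hG
  obtain ⟨hverts, -, hweight⟩ := hH
  have hne : H.verts.Nonempty := by
    rw [← Finset.card_pos, hverts]
    have := Finset.pred_card_le_card_erase (s := G.verts) (a := v)
    omega
  obtain ⟨x, hx, hx₁⟩ := hemp.constructible.exists_weight_eq_neg_one hne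
  rw [hverts, Finset.mem_erase] at hx
  have := hsmall x hx.2 hx.1
  rw [hweight] at hx₁
  omega

theorem not_erasable_of_small_weights_general
    (G : WGraph) (v : ℕ)
    (hcard : 2 ≤ G.verts.card)
    (hwv : G.weight v < 0)
    (hsmall : ∀ w ∈ G.verts, w ≠ v → G.weight w < -1) :
    ¬ Erasable G v := by
  rintro ⟨n, Gs, es, rfl, rfl, hstep, H, hH, hemp⟩
  have hsmall_of_le : ∀ i ≤ n, HasSmallWeights (Gs i) (es i) := by
    intro i
    induction i with
    | zero => exact fun _ => ⟨hcard, hwv, hsmall⟩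
    | succ i ih => exact fun hi => (hstep i hi).hasSmallWeights (ih (by omega))
  exact (hsmall_of_le n le_rfl).not_equivEmpty hH hemp

/-- If `G` has at least two vertices, the distinguished vertex `v` has
negative weight, and every other vertex of `G` has weight strictly less than
`-1`, then the weighted pair `(G, v)` is not erasable. -/
theorem not_erasable_of_small_weights
    (G : WGraph) (v : ℕ) (hv : v ∈ G.verts)
    (hcard : 2 ≤ G.verts.card)
    (hwv : G.weight v < 0)
    (hsmall : ∀ w ∈ G.verts, w ≠ v → G.weight w < -1) :
    ¬ Erasable G v :=
  not_erasable_of_small_weights_general G v hcard hwv hsmall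
end

section
/- Let d and r_1, ..., r_m be positive integers with r_m = a_{h+1} where the sequence (r_1,...,r_m) is of the form (S(a_1,b_1), ..., S(a_h,b_h), a_{h+1} repeated e times) with a_{i+1} = gcd(a_i, b_i), a_1 > ... > a_h > a_{h+1} ≥ 1, e ≥ 0, and S(a,b) the Euclidean-algorithm sequence of (a,b). If d² = Σ r_i² and 3d - 2 = Σ r_i and a_{h+1} > 1, then a_{h+1} = 2 and a_{h+1} divides d. -/
/-!
Every multiplicity is divisible by `g = a_{h+1}`: the entries of `S(aᵢ,bᵢ)` are multiples of
`gcd(aᵢ,bᵢ) = a_{i+1}`, and `g ∣ a_{i+1}` along the gcd chain. Hence `g² ∣ Σ rᵢ² = d²`, so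
`g ∣ d`, and then `g ∣ 3d - Σ rᵢ = 2`.
-/

theorem gcd_dvd_of_mem_euclidSeq (a : ℕ) : ∀ b x, x ∈ euclidSeq a b → Nat.gcd a b ∣ x := by
  induction a using Nat.strong_induction_on with
  | _ a ih =>
    intro b x hx
    rw [euclidSeq] at hx
    split at hx
    · simp at hx
    · rename_i ha
      rcases List.mem_append.mp hx with hx | hx
      · rw [List.eq_of_mem_replicate hx]
        exact Nat.gcd_dvd_left a b
      · rw [Nat.gcd_rec]
        exact ih (b % a) (Nat.mod_lt _ (Nat.pos_of_ne_zero ha)) a x hx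

theorem dvd_of_forall_succ_dvd {α : Type*} [Monoid α] {f : ℕ → α} {m n : ℕ}
    (hf : ∀ i, m ≤ i → i < n → f (i + 1) ∣ f i) {i : ℕ} (hmi : m ≤ i) (hin : i ≤ n) :
    f n ∣ f i := by
  induction n, hin using Nat.le_induction with
  | base => rfl
  | succ n hin ih =>
    exact (hf n (hmi.trans hin) n.lt_succ_self).trans
      (ih fun j hmj hjn => hf j hmj (hjn.trans n.lt_succ_self))

theorem dvd_of_sq_eq_sum_sq {g d : ℕ} {r : List ℕ} (hr : ∀ x ∈ r, g ∣ x)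
    (hd : d ^ 2 = (r.map (fun x => x ^ 2)).sum) : g ∣ d := by
  have hsq : g ^ 2 ∣ d ^ 2 := hd ▸ List.dvd_sum fun y hy => by
    obtain ⟨x, hx, rfl⟩ := List.mem_map.mp hy
    exact pow_dvd_pow_of_dvd (hr x hx) 2
  exact (Nat.pow_dvd_pow_iff two_ne_zero).mp hsq

theorem eq_two_of_dvd_of_sum_eq {g d : ℕ} {r : List ℕ} (hr : ∀ x ∈ r, g ∣ x)
    (h1 : d ^ 2 = (r.map (fun x => x ^ 2)).sum) (h2 : 3 * d = r.sum + 2) (hg : 1 < g) :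
    g = 2 ∧ g ∣ d := by
  have hgd : g ∣ d := dvd_of_sq_eq_sum_sq hr h1
  have hg2 : g ∣ 2 := by
    have := Nat.dvd_sub (hgd.mul_left 3) (List.dvd_sum hr)
    rwa [h2, Nat.add_sub_cancel_left] at this
  exact ⟨le_antisymm (Nat.le_of_dvd two_pos hg2) hg, hgd⟩

theorem last_multiplicity_eq_two_general
    (h e : ℕ) (a b : ℕ → ℕ)
    (hgcd : ∀ i, 1 ≤ i → i ≤ h → a (i + 1) = Nat.gcd (a i) (b i))
    (r : List ℕ)
    (hr : r = ((List.range h).map (fun j => euclidSeq (a (j + 1)) (b (j + 1)))).flatten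
            ++ List.replicate e (a (h + 1)))
    (d : ℕ)
    (h1 : d ^ 2 = (r.map (fun x => x ^ 2)).sum)
    (h2 : 3 * d = r.sum + 2)
    (hgt : 1 < a (h + 1)) :
    a (h + 1) = 2 ∧ a (h + 1) ∣ d := by
  have hchain : ∀ i, 1 ≤ i → i ≤ h + 1 → a (h + 1) ∣ a i :=
    fun i hi hih => dvd_of_forall_succ_dvd (fun j hj hjh => by
      rw [hgcd j hj (Nat.lt_succ_iff.mp hjh)]
      exact Nat.gcd_dvd_left _ _) hi hih
  have hmem : ∀ x ∈ r, a (h + 1) ∣ x := by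
    intro x hx
    rcases List.mem_append.mp (hr ▸ hx) with hx | hx
    · obtain ⟨_, hl, hxl⟩ := List.mem_flatten.mp hx
      obtain ⟨j, hj, rfl⟩ := List.mem_map.mp hl
      have hjh : j + 1 ≤ h := List.mem_range.mp hj
      refine (hchain (j + 2) (by omega) (by omega)).trans ?_
      rw [hgcd (j + 1) (by omega) hjh]
      exact gcd_dvd_of_mem_euclidSeq _ _ x hxl
    · rw [List.eq_of_mem_replicate hx]
  exact eq_two_of_dvd_of_sum_eq hmem h1 h2 hgt

/-- Suppose the multiplicity sequence `(r₁,…,r_m)` has the form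
`(S(a₁,b₁), …, S(a_h,b_h), a_{h+1} repeated e times)` with
`a_{i+1} = gcd(aᵢ,bᵢ)`, `a₁ > ⋯ > a_h > a_{h+1} ≥ 1`, and `d` is a positive
integer with `d² = Σ rᵢ²` and `3d - 2 = Σ rᵢ`.  If `a_{h+1} > 1` then
`a_{h+1} = 2` and `a_{h+1} ∣ d`. -/
theorem last_multiplicity_eq_two
    (h e : ℕ) (hh : 1 ≤ h) (a b : ℕ → ℕ)
    (hapos : ∀ i, 1 ≤ i → i ≤ h → 0 < a i)
    (hbpos : ∀ i, 1 ≤ i → i ≤ h → 0 < b i)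
    (hgcd : ∀ i, 1 ≤ i → i ≤ h → a (i + 1) = Nat.gcd (a i) (b i))
    (hdec : ∀ i, 1 ≤ i → i ≤ h → a (i + 1) < a i)
    (hlast : 1 ≤ a (h + 1))
    (r : List ℕ)
    (hr : r = ((List.range h).map (fun j => euclidSeq (a (j + 1)) (b (j + 1)))).flatten
            ++ List.replicate e (a (h + 1)))
    (d : ℕ) (hd : 0 < d)
    (h1 : d ^ 2 = (r.map (fun x => x ^ 2)).sum)
    (h2 : 3 * d = r.sum + 2)
    (hgt : 1 < a (h + 1)) :
    a (h + 1) = 2 ∧ a (h + 1) ∣ d :=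
  last_multiplicity_eq_two_general h e a b hgcd r hr d h1 h2 hgt
end
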